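/- Let R be a commutative ring and S an anti-Archimedean multiplicative subset of R. An R-module M is uniformly S-Noetherian if and only if there exists s ∈ S such that M is s-finite and 𝔭M is s-finite for every prime ideal 𝔭 of R. -/

import Mathlib

/-- A submodule `N` is `s`-finite if there is a finitely generated submodule `F`
with `s N ⊆ F ⊆ N`. -/
def SFinSub {R M : Type*} [CommRing R] [AddCommGroup M] [Module R M]
    (s : R) (N : Submodule R M) : Prop :=
  ∃ F : Submodule R M, F.FG ∧ F ≤ N ∧ ∀ x ∈ N, s • x ∈ F

/-- `S` is anti-Archimedean: for every `s ∈ S`, `(⋂_{n ≥ 1} sⁿR) ∩ S ≠ ∅`. -/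
def AntiArchimedean {R : Type*} [CommRing R] (S : Submonoid R) : Prop :=
  ∀ s ∈ S, ∃ t ∈ S, ∀ n : ℕ, 1 ≤ n → s ^ n ∣ t

/-!
Pick `t ∈ S` divisible by every power of `s`; it then suffices that every submodule is
`sⁿ`-finite for some `n`. Otherwise Zorn's lemma (applicable because finitely generated
submodules are compact) gives a submodule `N` maximal among those that are not; let
`p = (N : M)`. If `N ⊔ K` is `a`-finite and some `L` with `N ⊓ K ≤ L ≤ N` is `c`-finite,
then `N` is `ca`-finite. If some `a ∉ p` has `(N :_M a) ⊋ N`, apply this to `K = aM`,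
`L = a (N :_M a)`: both `N ⊔ aM` and `(N :_M a)` strictly contain `N`. Otherwise `p` is
prime, and we apply it to `K = Rx` for some `x ∉ N` and `L = pM`.
-/

open Submodule

section

variable {R M : Type*} [CommRing R] [AddCommGroup M] [Module R M]

theorem SFinSub.of_dvd {a b : R} {N : Submodule R M} (h : SFinSub a N) (hab : a ∣ b) :
    SFinSub b N := by
  obtain ⟨F, hF, hFN, haF⟩ := h
  obtain ⟨c, rfl⟩ := hab
  exact ⟨F, hF, hFN, fun x hx => by rw [mul_comm, mul_smul]; exact F.smul_mem c (haF x hx)⟩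

theorem SFinSub.map {M' : Type*} [AddCommGroup M'] [Module R M'] {a : R} {N : Submodule R M}
    (h : SFinSub a N) (f : M →ₗ[R] M') : SFinSub a (N.map f) := by
  obtain ⟨F, hF, hFN, haF⟩ := h
  refine ⟨F.map f, hF.map f, map_mono hFN, ?_⟩
  rintro _ ⟨x, hx, rfl⟩
  exact ⟨a • x, haF x hx, map_smul f a x⟩

theorem SFinSub.exists_mem_of_isChain {a : R} {c : Set (Submodule R M)}
    (hc : IsChain (· ≤ ·) c) (hne : c.Nonempty) (h : SFinSub a (sSup c)) :
    ∃ N ∈ c, SFinSub a N := by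
  obtain ⟨F, hF, hFc, haF⟩ := h
  obtain ⟨N, hNc, hFN⟩ :=
    (CompleteLattice.isCompactElement_iff_le_of_directed_sSup_le _ _).mp
      ((fg_iff_compact F).mp hF) c hne hc.directedOn hFc
  exact ⟨N, hNc, F, hF, hFN, fun x hx => haF x (le_sSup hNc hx)⟩

theorem Submodule.FG.exists_fg_le_sup_of_le_sup {F N K : Submodule R M} (hF : F.FG)
    (hle : F ≤ N ⊔ K) : ∃ F₀ : Submodule R M, F₀.FG ∧ F₀ ≤ N ∧ F ≤ F₀ ⊔ K := by
  obtain ⟨T, rfl⟩ := hF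
  have hdecomp : ∀ t ∈ T, ∃ n ∈ N, ∃ k ∈ K, n + k = t :=
    fun t ht => mem_sup.mp (hle (subset_span ht))
  choose! n hn k hk hnk using hdecomp
  refine ⟨span R (n '' T), fg_span (T.finite_toSet.image n), ?_, ?_⟩
  · refine span_le.mpr ?_
    rintro _ ⟨t, ht, rfl⟩
    exact hn t ht
  · refine span_le.mpr fun t ht => ?_
    rw [← hnk t ht]
    exact add_mem_sup (subset_span ⟨t, ht, rfl⟩) (hk t ht)

theorem SFinSub.mul_of_sup {a c : R} {N K L : Submodule R M} (hNK : SFinSub a (N ⊔ K))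
    (hL : SFinSub c L) (hinf : N ⊓ K ≤ L) (hLN : L ≤ N) : SFinSub (c * a) N := by
  obtain ⟨F, hF, hFNK, haF⟩ := hNK
  obtain ⟨F₀, hF₀, hF₀N, hFF₀⟩ := hF.exists_fg_le_sup_of_le_sup hFNK
  obtain ⟨G, hG, hGL, hcG⟩ := hL
  refine ⟨F₀ ⊔ G, hF₀.sup hG, sup_le hF₀N (hGL.trans hLN), fun y hy => ?_⟩
  obtain ⟨w, hw, k, hk, hwk⟩ := mem_sup.mp (hFF₀ (haF y (mem_sup_left hy)))
  have hkN : k ∈ N := by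
    rw [← add_sub_cancel_left w k, hwk]
    exact N.sub_mem (N.smul_mem a hy) (hF₀N hw)
  rw [mul_smul, ← hwk, smul_add]
  exact add_mem_sup (F₀.smul_mem c hw) (hcG k (hinf ⟨hkN, hk⟩))

theorem SFinSub.of_sup_range_lsmul {a c b : R} {N : Submodule R M}
    (h₁ : SFinSub a (N ⊔ LinearMap.range (LinearMap.lsmul R M b)))
    (h₂ : SFinSub c (N.comap (LinearMap.lsmul R M b))) : SFinSub (c * a) N := by
  refine h₁.mul_of_sup (h₂.map _) ?_ (map_comap_le _ _)
  rintro _ ⟨hyN, m, rfl⟩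
  exact ⟨m, hyN, rfl⟩

theorem SFinSub.of_sup_span_singleton {a c : R} {N : Submodule R M} {x : M} {p : Ideal R}
    (h₁ : SFinSub a (N ⊔ span R {x})) (h₂ : SFinSub c (p • (⊤ : Submodule R M)))
    (hx : ∀ r : R, r • x ∈ N → r ∈ p) (hpN : p • (⊤ : Submodule R M) ≤ N) :
    SFinSub (c * a) N := by
  refine h₁.mul_of_sup h₂ ?_ hpN
  rintro _ ⟨hyN, hy⟩
  obtain ⟨r, rfl⟩ := mem_span_singleton.mp hy
  exact smul_mem_smul (hx r hyN) mem_top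

theorem exists_maximal_forall_not_pow_sFinSub (s : R) {N₀ : Submodule R M}
    (hN₀ : ∀ n : ℕ, ¬SFinSub (s ^ n) N₀) :
    ∃ N, N₀ ≤ N ∧ Maximal (fun N : Submodule R M => ∀ n : ℕ, ¬SFinSub (s ^ n) N) N :=
  zorn_le_nonempty₀ _ (fun c hc hchain y hy =>
    ⟨sSup c, fun n hn =>
      let ⟨_, hNc, hN⟩ := hn.exists_mem_of_isChain hchain ⟨y, hy⟩
      hc hNc n hN, fun _ hz => le_sSup hz⟩) N₀ hN₀

theorem isPrime_colon_univ_of_comap_lsmul_le {N : Submodule R M} (hN : N ≠ ⊤)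
    (h : ∀ a ∉ N.colon Set.univ, N.comap (LinearMap.lsmul R M a) ≤ N) :
    (N.colon Set.univ).IsPrime := by
  refine Ideal.isPrime_iff.mpr ⟨fun htop => hN (eq_top_iff.mpr fun m _ => ?_), fun hab => ?_⟩
  · simpa using mem_colon.mp (htop ▸ Submodule.mem_top : (1 : R) ∈ N.colon Set.univ) m trivial
  · rename_i a b
    by_cases ha : a ∈ N.colon Set.univ
    · exact Or.inl ha
    refine Or.inr (mem_colon.mpr fun m _ => h a ha ?_)
    rw [mem_comap, LinearMap.lsmul_apply, ← mul_smul]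
    exact mem_colon.mp hab m trivial

theorem exists_pow_sFinSub_of_prime_smul_top {s : R} (hM : SFinSub s (⊤ : Submodule R M))
    (hp : ∀ p : Ideal R, p.IsPrime → SFinSub s (p • (⊤ : Submodule R M)))
    (N : Submodule R M) : ∃ n : ℕ, SFinSub (s ^ n) N := by
  by_contra! hN
  obtain ⟨N, -, hmax⟩ := exists_maximal_forall_not_pow_sFinSub s hN
  have hgt : ∀ N', N < N' → ∃ n : ℕ, SFinSub (s ^ n) N' := fun N' hlt => by
    simpa using hmax.not_prop_of_gt hlt
  have hNtop : N ≠ ⊤ := fun h => hmax.prop 1 (by rwa [pow_one, h])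
  set p := N.colon Set.univ
  by_cases hsat : ∀ a ∉ p, N.comap (LinearMap.lsmul R M a) ≤ N
  · obtain ⟨x, hx⟩ : ∃ x, x ∉ N := by
      by_contra! h
      exact hNtop (eq_top_iff.mpr fun m _ => h m)
    obtain ⟨j, hj⟩ := hgt _ (left_lt_sup.mpr ((span_singleton_le_iff_mem x N).not.mpr hx))
    have hxp : ∀ r : R, r • x ∈ N → r ∈ p := fun r hr =>
      by_contra fun hrp => hx (hsat r hrp hr)
    exact hmax.prop (j + 1) (pow_succ' s j ▸ hj.of_sup_span_singleton
      (hp p (isPrime_colon_univ_of_comap_lsmul_le hNtop hsat)) hxp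
      (smul_le.mpr fun r hr m _ => mem_colon.mp hr m trivial))
  · push Not at hsat
    obtain ⟨a, ha, hcomap⟩ := hsat
    have hrange : ¬LinearMap.range (LinearMap.lsmul R M a) ≤ N := fun hle =>
      ha (mem_colon.mpr fun m _ => hle ⟨m, rfl⟩)
    obtain ⟨j, hj⟩ := hgt _ (left_lt_sup.mpr hrange)
    obtain ⟨k, hk⟩ := hgt _ (lt_of_le_not_ge (fun y hy => N.smul_mem a hy) hcomap)
    exact hmax.prop (k + j) (pow_add s k j ▸ hj.of_sup_range_lsmul hk)

end

theorem uniformly_S_noetherian_iff_prime_smul_sfinite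
    {R M : Type*} [CommRing R] [AddCommGroup M] [Module R M]
    (S : Submonoid R) (hS : AntiArchimedean S) :
    (∃ s ∈ S, ∀ N : Submodule R M, SFinSub s N) ↔
    (∃ s ∈ S, SFinSub s (⊤ : Submodule R M) ∧
      ∀ p : Ideal R, p.IsPrime → SFinSub s (p • (⊤ : Submodule R M))) := by
  constructor
  · rintro ⟨s, hs, h⟩
    exact ⟨s, hs, h ⊤, fun p _ => h _⟩
  · rintro ⟨s, hs, hM, hp⟩
    obtain ⟨t, ht, hst⟩ := hS s hs
    refine ⟨t, ht, fun N => ?_⟩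
    obtain ⟨n, hn⟩ := exists_pow_sFinSub_of_prime_smul_top hM hp N
    exact (hn.of_dvd (pow_dvd_pow s n.le_succ)).of_dvd (hst (n + 1) n.succ_pos)
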